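/- Let R be a nontrivial commutative ring with identity having more than one nonzero zero-divisor. Then diam(Γ(R)) = 3 if and only if either (i) R is Boolean and not isomorphic to ℤ/2ℤ × ℤ/2ℤ, or (ii) Z(R) is not an ideal of R and R is neither Boolean nor isomorphic to a subring of a product of two integral domains, or (iii) Z(R) is an ideal of R and there exists a pair of zero-divisors x, y of R with ann(x,y) = (0). -/

import Mathlib

set_option linter.unusedSectionVars false
set_option maxHeartbeats 1000000


/-- The set of zero-divisors of a commutative ring (including `0`). -/
def zdSet (R : Type*) [CommRing R] : Set R :=
  {x : R | ∃ y : R, y ≠ 0 ∧ x * y = 0}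

/-- The set of nonzero zero-divisors. -/
def zdStar (R : Type*) [CommRing R] : Set R :=
  {x : R | x ≠ 0 ∧ ∃ y : R, y ≠ 0 ∧ x * y = 0}

/-- The zero-divisor graph `Γ(R)`: vertices are the nonzero zero-divisors, and distinct
`x`, `y` are adjacent iff `x * y = 0`. -/
def zdGraph (R : Type*) [CommRing R] : SimpleGraph (zdStar R) where
  Adj x y := x.1 ≠ y.1 ∧ x.1 * y.1 = 0
  symm := ⟨fun x y h => ⟨h.1.symm, by rw [mul_comm]; exact h.2⟩⟩
  loopless := ⟨fun x h => h.1 rfl⟩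

/-- The extended zero-divisor graph `Γ̃(R)`: vertices are the nonzero zero-divisors, and
distinct `x`, `y` are adjacent iff `x * y = 0` or `x + y ∈ Z(R)`. -/
def zdExtGraph (R : Type*) [CommRing R] : SimpleGraph (zdStar R) where
  Adj x y := x.1 ≠ y.1 ∧ (x.1 * y.1 = 0 ∨ x.1 + y.1 ∈ zdSet R)
  symm := ⟨fun x y h => ⟨h.1.symm, by rw [mul_comm, add_comm]; exact h.2⟩⟩
  loopless := ⟨fun x h => h.1 rfl⟩

universe u


variable {R : Type u} [CommRing R] [Nontrivial R]

/-- "no distance-3 pair" hypothesis -/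
def NoPair (R : Type u) [CommRing R] : Prop :=
  ∀ x y : R, x ∈ zdStar R → y ∈ zdStar R → x ≠ y → x * y ≠ 0 →
    ∃ a : R, a ≠ 0 ∧ a * x = 0 ∧ a * y = 0

lemma zd_of_mul_eq_zero {x w : R} (hw : w ≠ 0) (h : x * w = 0) : x ∈ zdSet R := ⟨w, hw, h⟩

lemma zdStar_mem {x : R} (hx : x ≠ 0) {w : R} (hw : w ≠ 0) (h : x * w = 0) : x ∈ zdStar R :=
  ⟨hx, w, hw, h⟩

lemma one_notMem_zdSet : (1 : R) ∉ zdSet R := by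
  rintro ⟨w, hw, h⟩; rw [one_mul] at h; exact hw h

lemma zero_mem_zdSet : (0 : R) ∈ zdSet R := ⟨1, one_ne_zero, by ring⟩

lemma smul_mem_zdSet {x : R} (hx : x ∈ zdSet R) (r : R) : r * x ∈ zdSet R := by
  obtain ⟨w, hw, h⟩ := hx
  exact ⟨w, hw, by rw [mul_assoc, h, mul_zero]⟩

/-- if the sum of two zero divisors is regular, their product is zero (under NoPair) -/
lemma pair_mul_zero (H : NoPair R) {x y : R} (hx : x ∈ zdSet R) (hy : y ∈ zdSet R)
    (hs : x + y ∉ zdSet R) : x * y = 0 := by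
  have hx0 : x ≠ 0 := by rintro rfl; rw [zero_add] at hs; exact hs hy
  have hy0 : y ≠ 0 := by rintro rfl; rw [add_zero] at hs; exact hs hx
  have hxy : x ≠ y := by
    rintro rfl
    exact hs (by simpa [two_mul] using smul_mem_zdSet hx 2)
  by_contra hne
  obtain ⟨a, ha, hax, hay⟩ := H x y ⟨hx0, hx⟩ ⟨hy0, hy⟩ hxy hne
  exact hs ⟨a, ha, by rw [add_mul, mul_comm x a, mul_comm y a] at *; rw [hax, hay, add_zero]⟩

section Witness
variable (H : NoPair R) {x y : R} (hx : x ∈ zdStar R) (hy : y ∈ zdStar R)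
  (hxy : x * y = 0) (hs : x + y ∉ zdSet R)

include H hx hy hxy hs

/-- common annihilator of x,y is trivial -/
lemma annxy {a : R} (hax : a * x = 0) (hay : a * y = 0) : a = 0 := by
  by_contra ha
  exact hs ⟨a, ha, by rw [add_mul, mul_comm x a, mul_comm y a, hax, hay, add_zero]⟩

/-- nonreduced auxiliary: no square-zero element can have n*x ≠ 0 -/
lemma aux_nonred {n : R} (hn2 : n * n = 0) (hnx : n * x ≠ 0) : False := by
  have hn : n ≠ 0 := by rintro rfl; rw [zero_mul] at hnx; exact hnx rfl
  have hreg : x + y + n ∉ zdSet R := by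
    rintro ⟨c, hc, hcc⟩
    have h1 : (x + y) * (n * c) = 0 := by
      have : (x + y) * c = -(n * c) := by linear_combination hcc
      calc (x + y) * (n * c) = ((x + y) * c) * n := by ring
        _ = -(n * c) * n := by rw [this]
        _ = -(c * (n * n)) := by ring
        _ = 0 := by rw [hn2]; ring
    have hnc : n * c = 0 := by
      by_contra h
      exact hs ⟨n * c, h, h1⟩
    have : (x + y) * c = 0 := by
      have : (x + y) * c = -(n * c) := by linear_combination hcc
      rw [this, hnc, neg_zero]
    exact hs ⟨c, hc, this⟩
  by_cases hny : n * y = 0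
  · -- y + n ∈ Z, x + (y+n) regular, product x*(y+n) = x*n ≠ 0 contra
    have h1 : y + n ∈ zdSet R := ⟨n, hn, by rw [add_mul, mul_comm y n, hny, hn2, add_zero]⟩
    have h2 : x + (y + n) ∉ zdSet R := by rw [← add_assoc]; exact hreg
    have := pair_mul_zero H hx.2 h1 h2
    rw [mul_add, hxy, zero_add, mul_comm x n] at this
    exact hnx this
  · -- x + n ∈ Z
    have hxn : x ≠ n := by
      rintro rfl; exact hnx hn2
    have h1 : x + n ∈ zdSet R := by
      by_contra hreg2
      obtain ⟨a, ha, hax, han⟩ := H x n hx ⟨hn, n, hn, hn2⟩ hxn (by rwa [mul_comm])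
      exact hreg2 ⟨a, ha, by rw [add_mul, mul_comm x a, mul_comm n a, hax, han, add_zero]⟩
    have h2 : (x + n) + y ∉ zdSet R := by
      have : x + n + y = x + y + n := by ring
      rw [this]; exact hreg
    have := pair_mul_zero H h1 hy.2 h2
    rw [add_mul, hxy, zero_add] at this
    exact hny this

/-- R has no nonzero square-zero elements -/
lemma sq_zero {n : R} (hn2 : n * n = 0) : n = 0 := by
  by_contra hn
  have h1 : n * (x + y) ≠ 0 := by
    intro h; exact hs ⟨n, hn, by rwa [mul_comm]⟩
  rw [mul_add] at h1
  by_cases h : n * x ≠ 0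
  · exact aux_nonred H hx hy hxy hs hn2 h
  · push_neg at h
    have h' : n * y ≠ 0 := by intro h2; rw [h, h2, add_zero] at h1; exact h1 rfl
    exact aux_nonred H hy hx (by rwa [mul_comm]) (by rwa [add_comm]) hn2 h'


/-- every nonzero zero divisor annihilates x or y -/
lemma zd_claim {z : R} (hz : z ∈ zdStar R) : z * x = 0 ∨ z * y = 0 := by
  by_contra hcon
  push_neg at hcon
  obtain ⟨hzx, hzy⟩ := hcon
  have hzy' : z ≠ y := by rintro rfl; exact hzx (by rw [mul_comm]; exact hxy)
  obtain ⟨b, hb, hbz, hby⟩ := H z y hz hy hzy' hzy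
  have hyy : y * y ≠ 0 := fun h => hy.1 (sq_zero H hx hy hxy hs h)
  have hp0 : z * x + y ≠ 0 := by
    intro h
    exact hyy (by linear_combination y * h - z * hxy)
  have hpz : z * x + y ∈ zdStar R :=
    ⟨hp0, b, hb, by linear_combination x * hbz + hby⟩
  have hpx : z * x + y ≠ x := by
    intro h
    exact hyy (by linear_combination y * h + (1 - z) * hxy)
  have hprod : (z * x + y) * x ≠ 0 := by
    intro h
    have h2 : (z * x) * (z * x) = 0 := by linear_combination z * h - z * hxy
    exact hzx (sq_zero H hx hy hxy hs h2)
  obtain ⟨e, he, he1, hex⟩ := H (z * x + y) x hpz hx hpx hprod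
  have hey : e * y = 0 := by linear_combination he1 - z * hex
  exact he (annxy H hx hy hxy hs hex hey)


/-- the annihilator of x is prime (as a predicate on products) -/
lemma ann_prime_aux {a b : R} (hab : a * b * x = 0) (ha : a * x ≠ 0) (hb : b * x ≠ 0) :
    False := by
  have ha0 : a ≠ 0 := fun h => ha (by rw [h, zero_mul])
  have hb0 : b ≠ 0 := fun h => hb (by rw [h, zero_mul])
  have haz : a ∈ zdStar R := ⟨ha0, b * x, hb, by linear_combination hab⟩
  have hbz : b ∈ zdStar R := ⟨hb0, a * x, ha, by linear_combination hab⟩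
  have hay : a * y = 0 := by
    rcases zd_claim H hx hy hxy hs haz with h | h
    · exact absurd h ha
    · exact h
  have hby : b * y = 0 := by
    rcases zd_claim H hx hy hxy hs hbz with h | h
    · exact absurd h hb
    · exact h
  have hab0 : a * b = 0 :=
    annxy H hx hy hxy hs hab (by linear_combination b * hay)
  have hyy : y * y ≠ 0 := fun h => hy.1 (sq_zero H hx hy hxy hs h)
  have hay0 : a + y ≠ 0 := fun h => ha (by linear_combination x * h - hxy)
  have hby0 : b + y ≠ 0 := fun h => hb (by linear_combination x * h - hxy)
  have hayz : a + y ∈ zdStar R := ⟨hay0, b, hb0, by linear_combination hab0 + hby⟩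
  have hbyz : b + y ∈ zdStar R := ⟨hby0, a, ha0, by linear_combination hab0 + hay⟩
  have hne : a + y ≠ b + y := by
    intro h
    have hab' : a = b := by linear_combination h
    exact ha0 (sq_zero H hx hy hxy hs (by rw [← hab'] at hab0; exact hab0))
  have hprod : (a + y) * (b + y) ≠ 0 := by
    intro h
    exact hyy (by linear_combination h - hab0 - hay - hby)
  obtain ⟨c, hc, hc1, hc2⟩ := H (a + y) (b + y) hayz hbyz hne hprod
  have hcyy : (c * y) * (c * y) = 0 := by
    have h1 : c * y * y = 0 := by linear_combination y * hc2 - b * hc1 + c * hab0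
    linear_combination c * h1
  have hcy : c * y = 0 := sq_zero H hx hy hxy hs hcyy
  have hca : c * a = 0 := by linear_combination hc1 - hcy
  have hcb : c * b = 0 := by linear_combination hc2 - hcy
  have hcx : c * x ≠ 0 := fun h => hc (annxy H hx hy hxy hs h hcy)
  have hwx : (c * x) * x ≠ 0 := by
    intro h
    exact hcx (sq_zero H hx hy hxy hs (by linear_combination c * h))
  have hwy0 : c * x + y ≠ 0 := fun h => hwx (by linear_combination x * h - hxy)
  have hwyz : c * x + y ∈ zdStar R :=
    ⟨hwy0, a, ha0, by linear_combination x * hca + hay⟩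
  have hwyx : c * x + y ≠ x := fun h => hyy (by linear_combination y * h + (1 - c) * hxy)
  have hprod2 : (c * x + y) * x ≠ 0 := fun h => hwx (by linear_combination h - hxy)
  obtain ⟨g, hg, hg1, hgx⟩ := H (c * x + y) x hwyz hx hwyx hprod2
  have hgy : g * y = 0 := by linear_combination hg1 - c * hgx
  exact hg (annxy H hx hy hxy hs hgx hgy)

end Witness

/-- annihilator ideal of an element -/
def annId (x : R) : Ideal R where
  carrier := {a : R | a * x = 0}
  zero_mem' := by simp
  add_mem' := by
    intro a b ha hb
    simp only [Set.mem_setOf_eq] at *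
    rw [add_mul, ha, hb, add_zero]
  smul_mem' := by
    intro c a ha
    simp only [Set.mem_setOf_eq, smul_eq_mul] at *
    rw [mul_assoc, ha, mul_zero]

lemma mem_annId {x a : R} : a ∈ annId x ↔ a * x = 0 := Iff.rfl

lemma not_ideal_witness (hni : ¬ ∃ I : Ideal R, (I : Set R) = zdSet R) :
    ∃ x y : R, x ∈ zdSet R ∧ y ∈ zdSet R ∧ x + y ∉ zdSet R := by
  by_contra h
  push_neg at h
  exact hni ⟨{ carrier := zdSet R
               zero_mem' := zero_mem_zdSet
               add_mem' := fun {a b} ha hb => h a b ha hb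
               smul_mem' := fun c a ha => by
                 simpa [smul_eq_mul] using smul_mem_zdSet ha c }, rfl⟩

/-- main embedding construction -/
lemma emb_of_noPair (H : NoPair R) (hni : ¬ ∃ I : Ideal R, (I : Set R) = zdSet R) :
    ∃ (D₁ : Type u) (D₂ : Type u) (_ : CommRing D₁) (_ : CommRing D₂)
      (_ : IsDomain D₁) (_ : IsDomain D₂) (f : R →+* D₁ × D₂), Function.Injective f := by
  obtain ⟨x, y, hx, hy, hs⟩ := not_ideal_witness hni
  have hx0 : x ≠ 0 := by rintro rfl; rw [zero_add] at hs; exact hs hy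
  have hy0 : y ≠ 0 := by rintro rfl; rw [add_zero] at hs; exact hs hx
  have hxs : x ∈ zdStar R := ⟨hx0, hx⟩
  have hys : y ∈ zdStar R := ⟨hy0, hy⟩
  have hxy : x * y = 0 := pair_mul_zero H hx hy hs
  have hyx : y * x = 0 := by rwa [mul_comm]
  have hs' : y + x ∉ zdSet R := by rwa [add_comm]
  have hP : (annId x).IsPrime := by
    constructor
    · rw [Ideal.ne_top_iff_one, mem_annId, one_mul]; exact hx0
    · intro a b hab
      by_contra hcon
      push_neg at hcon
      exact ann_prime_aux H hxs hys hxy hs hab hcon.1 hcon.2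
  have hQ : (annId y).IsPrime := by
    constructor
    · rw [Ideal.ne_top_iff_one, mem_annId, one_mul]; exact hy0
    · intro a b hab
      by_contra hcon
      push_neg at hcon
      exact ann_prime_aux H hys hxs hyx hs' hab hcon.1 hcon.2
  haveI := hP; haveI := hQ
  refine ⟨R ⧸ annId x, R ⧸ annId y, inferInstance, inferInstance, inferInstance, inferInstance,
    (Ideal.Quotient.mk (annId x)).prod (Ideal.Quotient.mk (annId y)), ?_⟩
  rw [injective_iff_map_eq_zero]
  intro a ha
  rw [Prod.ext_iff] at ha
  obtain ⟨h1, h2⟩ := ha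
  simp only [RingHom.prod_apply, Prod.fst_zero, Prod.snd_zero,
    Ideal.Quotient.eq_zero_iff_mem, mem_annId] at h1 h2
  exact annxy H hxs hys hxy hs h1 h2

open SimpleGraph in
lemma edist_le_three (u v : (zdStar R)) : (zdGraph R).edist u v ≤ 3 := by
  rcases eq_or_ne u v with rfl | huv
  · simp [edist_self]
  obtain ⟨hx0, w, hw0, hxw⟩ := u.2
  obtain ⟨hy0, w', hw'0, hyw'⟩ := v.2
  have hne : u.1 ≠ v.1 := fun h => huv (Subtype.ext h)
  have hwx : w * u.1 = 0 := (mul_comm w u.1).trans hxw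
  have hw'y : w' * v.1 = 0 := (mul_comm w' v.1).trans hyw'
  by_cases hxy : u.1 * v.1 = 0
  · have hadj : (zdGraph R).Adj u v := ⟨hne, hxy⟩
    have h := edist_le (Walk.cons hadj Walk.nil)
    simp only [Walk.length_cons, Walk.length_nil] at h
    exact h.trans (by norm_num)
  have hwz : w ∈ zdStar R := ⟨hw0, u.1, hx0, hwx⟩
  have hw'z : w' ∈ zdStar R := ⟨hw'0, v.1, hy0, hw'y⟩
  by_cases hay : w * v.1 = 0
  · -- u - w - v
    have h1 : (zdGraph R).Adj u (⟨w, hwz⟩ : (zdStar R)) :=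
      ⟨fun h => hxy (by have h' : u.1 = w := h; rw [h']; exact hay), hxw⟩
    have h2 : (zdGraph R).Adj (⟨w, hwz⟩ : (zdStar R)) v :=
      ⟨fun h => hxy (by have h' : w = v.1 := h; rw [← h']; exact hxw), hay⟩
    have h := edist_le (Walk.cons h1 (Walk.cons h2 Walk.nil))
    simp only [Walk.length_cons, Walk.length_nil] at h
    exact h.trans (by norm_num)
  by_cases hbx : w' * u.1 = 0
  · -- u - w' - v
    have h1 : (zdGraph R).Adj u (⟨w', hw'z⟩ : (zdStar R)) :=
      ⟨fun h => hxy (by have h' : u.1 = w' := h; rw [h']; exact hw'y),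
       by rw [mul_comm]; exact hbx⟩
    have h2 : (zdGraph R).Adj (⟨w', hw'z⟩ : (zdStar R)) v :=
      ⟨fun h => hxy (by have h' : w' = v.1 := h; rw [← h', mul_comm]; exact hbx), hw'y⟩
    have h := edist_le (Walk.cons h1 (Walk.cons h2 Walk.nil))
    simp only [Walk.length_cons, Walk.length_nil] at h
    exact h.trans (by norm_num)
  by_cases hab : w * w' ≠ 0
  · -- u - w*w' - v
    have hm : w * w' ∈ zdStar R := ⟨hab, u.1, hx0, by
      rw [mul_comm w w', mul_assoc, hwx, mul_zero]⟩
    have h1 : (zdGraph R).Adj u (⟨w * w', hm⟩ : (zdStar R)) :=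
      ⟨fun h => hxy (by have h' : u.1 = w * w' := h; rw [h', mul_assoc, hw'y, mul_zero]),
        by rw [← mul_assoc, hxw, zero_mul]⟩
    have h2 : (zdGraph R).Adj (⟨w * w', hm⟩ : (zdStar R)) v :=
      ⟨fun h => hxy (by have h' : w * w' = v.1 := h; rw [← h', ← mul_assoc, hxw, zero_mul]),
        by rw [mul_assoc, hw'y, mul_zero]⟩
    have h := edist_le (Walk.cons h1 (Walk.cons h2 Walk.nil))
    simp only [Walk.length_cons, Walk.length_nil] at h
    exact h.trans (by norm_num)
  push_neg at hab
  have hnuw : u.1 ≠ w := fun h => hbx (by rw [h, mul_comm]; exact hab)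
  have hnww' : w ≠ w' := fun h => hbx (by rw [← h]; exact hwx)
  have hnw'v : w' ≠ v.1 := fun h => hay (h ▸ hab)
  have h1 : (zdGraph R).Adj u (⟨w, hwz⟩ : (zdStar R)) := ⟨hnuw, hxw⟩
  have h2 : (zdGraph R).Adj (⟨w, hwz⟩ : (zdStar R)) (⟨w', hw'z⟩ : (zdStar R)) := ⟨hnww', hab⟩
  have h3 : (zdGraph R).Adj (⟨w', hw'z⟩ : (zdStar R)) v := ⟨hnw'v, hw'y⟩
  have h := edist_le (Walk.cons h1 (Walk.cons h2 (Walk.cons h3 Walk.nil)))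
  simp only [Walk.length_cons, Walk.length_nil] at h
  exact h.trans (by norm_num)

open SimpleGraph in
lemma edist_gt_two {u v : (zdStar R)} (hprod : u.1 * v.1 ≠ 0)
    (hann : ∀ a : R, a * u.1 = 0 → a * v.1 = 0 → a = 0)
    (hle : (zdGraph R).edist u v ≤ 2) : False := by
  obtain ⟨p, hp⟩ := exists_walk_of_edist_ne_top (G := zdGraph R) (u := u) (v := v) (by
    intro h
    rw [h] at hle
    exact (by norm_num : ¬ (⊤ : ℕ∞) ≤ 2) hle)
  have hlen : (p.length : ℕ∞) ≤ 2 := by rw [hp]; exact hle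
  have hlen' : p.length ≤ 2 := by exact_mod_cast hlen
  clear hlen hle hp
  rcases p with _ | ⟨h1, q⟩
  · obtain ⟨hu0, w, hw0, hxw⟩ := u.2
    exact hw0 (hann w ((mul_comm w u.1).trans hxw) ((mul_comm w u.1).trans hxw))
  · rename_i z
    rcases q with _ | ⟨h2, q'⟩
    · exact hprod h1.2
    · rename_i z2
      rcases q' with _ | ⟨h3, q''⟩
      · have hz1 : z.1 * u.1 = 0 := (mul_comm z.1 u.1).trans h1.2
        exact z.2.1 (hann z.1 hz1 h2.2)
      · simp only [Walk.length_cons] at hlen'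
        omega

/-- a distance-3 pair, stated algebraically -/
def HasPair (R : Type u) [CommRing R] : Prop :=
  ∃ x y : R, x ∈ zdStar R ∧ y ∈ zdStar R ∧ x ≠ y ∧ x * y ≠ 0 ∧
    ∀ a : R, a * x = 0 → a * y = 0 → a = 0

lemma noPair_of_not_hasPair (h : ¬ HasPair R) : NoPair R := by
  intro x y hx hy hne hprod
  by_contra hcon
  push_neg at hcon
  refine h ⟨x, y, hx, hy, hne, hprod, fun a hax hay => ?_⟩
  by_contra ha0
  exact (hcon a ha0 hax) hay

lemma not_hasPair_of_emb
    (hemb : ∃ (D₁ : Type u) (D₂ : Type u) (_ : CommRing D₁) (_ : CommRing D₂)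
      (_ : IsDomain D₁) (_ : IsDomain D₂) (f : R →+* D₁ × D₂), Function.Injective f) :
    ¬ HasPair R := by
  obtain ⟨D₁, D₂, _, _, _, _, f, hf⟩ := hemb
  rintro ⟨x, y, ⟨hx0, wx, hwx0, hxwx⟩, ⟨hy0, wy, hwy0, hywy⟩, hne, hprod, hann⟩
  have fne : ∀ r : R, r ≠ 0 → f r ≠ 0 := fun r hr h => hr (hf (h.trans (map_zero f).symm))
  have key : ∀ z w : R, z * w = 0 → w ≠ 0 → (f z).1 = 0 ∨ (f z).2 = 0 := by
    intro z w hzw hw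
    by_contra hcon
    push_neg at hcon
    have h0 : f z * f w = 0 := by rw [← map_mul, hzw, map_zero]
    have h1 : (f z).1 * (f w).1 = 0 := congrArg Prod.fst h0
    have h2 : (f z).2 * (f w).2 = 0 := congrArg Prod.snd h0
    have hw1 : (f w).1 = 0 := by
      rcases mul_eq_zero.mp h1 with h | h
      · exact absurd h hcon.1
      · exact h
    have hw2 : (f w).2 = 0 := by
      rcases mul_eq_zero.mp h2 with h | h
      · exact absurd h hcon.2
      · exact h
    exact fne w hw (Prod.ext hw1 hw2)
  -- a common-annihilator construction
  have main : ∀ z w z' w' : R, z * w = 0 → w ≠ 0 → z' * w' = 0 → z ≠ 0 →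
      (f z).1 = 0 → (f z').1 = 0 → (∀ a : R, a * z = 0 → a * z' = 0 → a = 0) → False := by
    intro z w z' w' hzw hw hz'w' hz0 hfz hfz' hann'
    have hz2 : (f z).2 ≠ 0 := by
      intro h
      exact fne z hz0 (Prod.ext hfz h)
    have h0 : f z * f w = 0 := by rw [← map_mul, hzw, map_zero]
    have h2 : (f z).2 * (f w).2 = 0 := congrArg Prod.snd h0
    have hw2 : (f w).2 = 0 := by
      rcases mul_eq_zero.mp h2 with h | h
      · exact absurd h hz2
      · exact h
    have hwz' : w * z' = 0 := by
      apply hf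
      rw [map_mul, map_zero]
      exact Prod.ext (by simp [hfz']) (by simp [hw2])
    exact hw (hann' w (by rw [mul_comm]; exact hzw) hwz')
  rcases key x wx hxwx hwx0 with hx1 | hx2
  · rcases key y wy hywy hwy0 with hy1 | hy2
    · exact main x wx y wy hxwx hwx0 hywy hx0 hx1 hy1 hann
    · -- f x = (0, *), f y = (*, 0) : x * y = 0
      refine hprod (hf ?_)
      rw [map_mul, map_zero]
      exact Prod.ext (by simp [hx1]) (by simp [hy2])
  · rcases key y wy hywy hwy0 with hy1 | hy2
    · refine hprod (hf ?_)
      rw [map_mul, map_zero]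
      exact Prod.ext (by simp [hy1]) (by simp [hx2])
    · -- symmetric to first case, swap coordinates via Prod.swap composition
      have main2 : False := by
        have hswap : ∀ a : R, a * y = 0 → a * x = 0 → a = 0 := fun a h1 h2 => hann a h2 h1
        -- use f composed with swap
        let g : R →+* D₂ × D₁ := (RingHom.prod (RingHom.snd D₁ D₂) (RingHom.fst D₁ D₂)).comp f
        have hg : Function.Injective g := by
          intro p q h
          apply hf
          have h1 : (f p).2 = (f q).2 := congrArg Prod.fst h
          have h2 : (f p).1 = (f q).1 := congrArg Prod.snd h
          exact Prod.ext h2 h1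
        have hgx : (g x).1 = 0 := hx2
        have hgy : (g y).1 = 0 := hy2
        have fne' : ∀ r : R, r ≠ 0 → g r ≠ 0 := fun r hr h => hr (hg (h.trans (map_zero g).symm))
        have hz2 : (g x).2 ≠ 0 := fun h => fne' x hx0 (Prod.ext hgx h)
        have h0 : g x * g wx = 0 := by rw [← map_mul, hxwx, map_zero]
        have h2' : (g x).2 * (g wx).2 = 0 := congrArg Prod.snd h0
        have hw2 : (g wx).2 = 0 := by
          rcases mul_eq_zero.mp h2' with h | h
          · exact absurd h hz2
          · exact h
        have hwz' : wx * y = 0 := by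
          apply hg
          rw [map_mul, map_zero]
          exact Prod.ext (by simp [hgy]) (by simp [hw2])
        exact hwx0 (hann wx (by rw [mul_comm]; exact hxwx) hwz')
      exact main2

lemma emb_of_iso (h : Nonempty (R ≃+* (ZMod 2 × ZMod 2))) :
    ∃ (D₁ : Type u) (D₂ : Type u) (_ : CommRing D₁) (_ : CommRing D₂)
      (_ : IsDomain D₁) (_ : IsDomain D₂) (f : R →+* D₁ × D₂), Function.Injective f := by
  obtain ⟨e⟩ := h
  haveI : IsDomain (ULift.{u} (ZMod 2)) := ULift.ringEquiv.toMulEquiv.isDomain (ZMod 2)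
  refine ⟨ULift.{u} (ZMod 2), ULift.{u} (ZMod 2), inferInstance, inferInstance,
    inferInstance, inferInstance,
    (e.trans (RingEquiv.prodCongr ULift.ringEquiv.symm ULift.ringEquiv.symm)).toRingHom, ?_⟩
  exact (e.trans (RingEquiv.prodCongr ULift.ringEquiv.symm ULift.ringEquiv.symm)).injective

lemma hasPair_of_ideal (hI : ∃ I : Ideal R, (I : Set R) = zdSet R)
    (h3 : ∃ x ∈ zdSet R, ∃ y ∈ zdSet R, ∀ a : R, a * x = 0 → a * y = 0 → a = 0) :
    HasPair R := by
  obtain ⟨I, hIc⟩ := hI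
  obtain ⟨x, hx, y, hy, hann⟩ := h3
  obtain ⟨wx, hwx0, hxwx⟩ := hx
  obtain ⟨wy, hwy0, hywy⟩ := hy
  have hx0 : x ≠ 0 := by
    rintro rfl
    exact hwy0 (hann wy (by ring) ((mul_comm wy y).trans hywy))
  have hy0 : y ≠ 0 := by
    rintro rfl
    exact hwx0 (hann wx ((mul_comm wx x).trans hxwx) (by ring))
  have hne : x ≠ y := by
    intro h
    exact hwx0 (hann wx ((mul_comm wx x).trans hxwx) (by rw [← h]; exact (mul_comm wx x).trans hxwx))
  have hmemI : ∀ z : R, z ∈ zdSet R → z ∈ I := by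
    intro z hz
    have : z ∈ (I : Set R) := hIc ▸ hz
    exact this
  have hxy : x * y ≠ 0 := by
    intro hxy0
    have hsum : x + y ∈ zdSet R := by
      have : x + y ∈ (I : Set R) := I.add_mem (hmemI x ⟨wx, hwx0, hxwx⟩) (hmemI y ⟨wy, hwy0, hywy⟩)
      rwa [hIc] at this
    obtain ⟨d, hd0, hsd⟩ := hsum
    have hdy : d * y = 0 := by
      refine hann (d * y) (by linear_combination d * hxy0) ?_
      linear_combination y * hsd - d * hxy0
    have hdx : d * x = 0 := by linear_combination hsd - hdy
    exact hd0 (hann d hdx hdy)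
  exact ⟨x, y, ⟨hx0, wx, hwx0, hxwx⟩, ⟨hy0, wy, hwy0, hywy⟩, hne, hxy, hann⟩

section Boolean
variable (hB : ∀ x : R, x * x = x)
include hB

lemma bool_two : (2 : R) = 0 := by linear_combination hB 2

lemma bool_char : CharP R 2 := by
  have h2 := bool_two hB
  refine ⟨fun n => ⟨fun h => ?_, fun h => ?_⟩⟩
  · by_contra hodd
    have : n % 2 = 1 := by omega
    obtain ⟨k, hk⟩ : ∃ k, n = 2 * k + 1 := ⟨n / 2, by omega⟩
    rw [hk] at h
    push_cast at h
    have : (1 : R) = 0 := by linear_combination h - (k : R) * h2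
    exact one_ne_zero this
  · obtain ⟨k, rfl⟩ := h
    push_cast
    linear_combination (k : R) * h2

lemma pair_of_triple {p q r : R} (hp : p ≠ 0) (hq : q ≠ 0) (hr : r ≠ 0)
    (hpq : p * q = 0) (hpr : p * r = 0) (hqr : q * r = 0) : HasPair R := by
  have h2 := bool_two hB
  have hp1 : p ≠ 1 := fun h => hq (by rw [h, one_mul] at hpq; exact hpq)
  have hq1 : q ≠ 1 := fun h => hp (by rw [h, mul_one] at hpq; exact hpq)
  have hne : p ≠ q := fun h => hp (by linear_combination (-1 : R) * hB p + hpq + p * h)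
  have hsum : p + q ≠ 1 := fun h => hr (by linear_combination -(r * h) + hpr + hqr)
  refine ⟨1 + p, 1 + q, ⟨?_, p, hp, by linear_combination hB p + p * h2⟩,
    ⟨?_, q, hq, by linear_combination hB q + q * h2⟩, ?_, ?_, ?_⟩
  · intro h
    exact hp1 (by linear_combination h - h2)
  · intro h
    exact hq1 (by linear_combination h - h2)
  · intro h
    exact hne (by linear_combination h)
  · intro h
    exact hsum (by linear_combination h - hpq - h2)
  · intro a h1 h2'
    linear_combination h2' - q * h1 + a * hpq
end Boolean

lemma four_iso (hB : ∀ x : R, x * x = x) {e : R} (he0 : e ≠ 0) (he1 : e ≠ 1)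
    (hall : ∀ f : R, f = 0 ∨ f = 1 ∨ f = e ∨ f = 1 + e) :
    Nonempty (R ≃+* (ZMod 2 × ZMod 2)) := by
  have h2 := bool_two hB
  haveI := bool_char hB
  let c : ZMod 2 →+* R := ZMod.castHom dvd_rfl R
  let g : ZMod 2 × ZMod 2 →+* R :=
  { toFun := fun p => c p.1 * e + c p.2 * (1 + e)
    map_one' := by
      simp only [Prod.fst_one, Prod.snd_one, map_one]
      linear_combination e * h2
    map_mul' := fun p q => by
      simp only [Prod.fst_mul, Prod.snd_mul, map_mul]
      linear_combination (-(c p.1 * c q.1) - c p.1 * c q.2 - c p.2 * c q.1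
        - c p.2 * c q.2) * hB e + (-(c p.1 * c q.2) - c p.2 * c q.1 - c p.2 * c q.2) * e * h2
    map_zero' := by simp
    map_add' := fun p q => by
      simp only [Prod.fst_add, Prod.snd_add, map_add]
      ring }
  have hinj : Function.Injective g := by
    rw [injective_iff_map_eq_zero]
    rintro ⟨a, b⟩ hp
    have hg : c a * e + c b * (1 + e) = 0 := hp
    fin_cases a <;> fin_cases b
    · rfl
    · exfalso
      have hg' : c 0 * e + c 1 * (1 + e) = 0 := hg
      simp only [map_zero, map_one, zero_mul, one_mul, zero_add] at hg'
      exact he1 (by linear_combination hg' - h2)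
    · exfalso
      have hg' : c 1 * e + c 0 * (1 + e) = 0 := hg
      simp only [map_zero, map_one, zero_mul, one_mul, mul_zero, add_zero] at hg'
      exact he0 hg'
    · exfalso
      have hg' : c 1 * e + c 1 * (1 + e) = 0 := hg
      simp only [map_one, one_mul] at hg'
      exact (one_ne_zero : (1 : R) ≠ 0) (by linear_combination hg' - e * h2)
  have hsurj : Function.Surjective g := by
    intro r
    rcases hall r with rfl | rfl | h | h
    · exact ⟨0, by simp [g]⟩
    · exact ⟨1, map_one g⟩
    · refine ⟨(1, 0), ?_⟩
      rw [h]
      show c 1 * e + c 0 * (1 + e) = e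
      simp
    · refine ⟨(0, 1), ?_⟩
      rw [h]
      show c 0 * e + c 1 * (1 + e) = 1 + e
      simp
  exact ⟨(RingEquiv.ofBijective g ⟨hinj, hsurj⟩).symm⟩

lemma boolean_pair (hB : ∀ x : R, x * x = x) (hcard : (zdStar R).Nontrivial)
    (hiso : ¬ Nonempty (R ≃+* (ZMod 2 × ZMod 2))) : HasPair R := by
  have h2 := bool_two hB
  obtain ⟨e, he, -, -, -⟩ := hcard
  obtain ⟨he0, w, hw0, hew⟩ := he
  have he1 : e ≠ 1 := by rintro rfl; rw [one_mul] at hew; exact hw0 hew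
  by_cases hall : ∀ f : R, f = 0 ∨ f = 1 ∨ f = e ∨ f = 1 + e
  · exact absurd (four_iso hB he0 he1 hall) hiso
  push_neg at hall
  obtain ⟨f, hf0, hf1, hfe, hfe'⟩ := hall
  -- orthogonal decomposition pieces
  have hab : (e * f) * (e * (1 + f)) = 0 := by
    linear_combination (e * e) * hB f + (e * e * f) * h2
  have hac : (e * f) * ((1 + e) * f) = 0 := by
    linear_combination (f * f) * hB e + (f * f * e) * h2
  have had : (e * f) * ((1 + e) * (1 + f)) = 0 := by
    linear_combination ((f + f * f)) * hB e + (e * (f + f * f)) * h2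
  have hbc : (e * (1 + f)) * ((1 + e) * f) = 0 := by
    linear_combination ((f + f * f)) * hB e + (e * (f + f * f)) * h2
  have hbd : (e * (1 + f)) * ((1 + e) * (1 + f)) = 0 := by
    linear_combination ((1 + f) * (1 + f)) * hB e + (e * (1 + f) * (1 + f)) * h2
  have hcd : ((1 + e) * f) * ((1 + e) * (1 + f)) = 0 := by
    linear_combination ((1 + e) * (1 + e)) * hB f + ((1 + e) * (1 + e) * f) * h2
  have heab : e * f + e * (1 + f) = e := by linear_combination (e * f) * h2
  have hecd : (1 + e) * f + (1 + e) * (1 + f) = 1 + e := by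
    linear_combination ((1 + e) * f) * h2
  have hfac : e * f + (1 + e) * f = f := by linear_combination (e * f) * h2
  by_cases hA : e * f ≠ 0
  · by_cases hb : e * (1 + f) ≠ 0
    · by_cases hc : (1 + e) * f ≠ 0
      · exact pair_of_triple hB hA hb hc hab hac hbc
      · push_neg at hc
        have hd : (1 + e) * (1 + f) ≠ 0 := by
          intro hd0
          exact he1 (by linear_combination -(hecd) + hc + hd0 - h2)
        exact pair_of_triple hB hA hb hd hab had hbd
    · push_neg at hb
      by_cases hc : (1 + e) * f ≠ 0
      · by_cases hd : (1 + e) * (1 + f) ≠ 0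
        · exact pair_of_triple hB hA hc hd hac had hcd
        · push_neg at hd
          exact absurd (show f = 1 by
            linear_combination (-1 : R) * hfac + heab + hecd - hb - hd + e * h2) hf1
      · push_neg at hc
        exact absurd (show f = e by
          linear_combination (-1 : R) * hfac + heab - hb + hc) hfe
  · push_neg at hA
    have hb : e * (1 + f) ≠ 0 := by
      intro hb0
      exact he0 (by linear_combination -(heab) + hA + hb0)
    have hc : (1 + e) * f ≠ 0 := by
      intro hc0
      exact hf0 (by linear_combination -(hfac) + hA + hc0)
    by_cases hd : (1 + e) * (1 + f) ≠ 0
    · exact pair_of_triple hB hb hc hd hbc hbd hcd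
    · push_neg at hd
      exact absurd (show f = 1 + e by
        linear_combination (-1 : R) * hfac + hecd + hA - hd) hfe'

open SimpleGraph in
theorem stmt11' (hcard : (zdStar R).Nontrivial) :
    (zdGraph R).ediam = 3 ↔
      (((∀ x : R, x * x = x) ∧ ¬ Nonempty (R ≃+* (ZMod 2 × ZMod 2))) ∨
       ((¬ (∃ I : Ideal R, (I : Set R) = zdSet R)) ∧ ¬ (∀ x : R, x * x = x) ∧
        ¬ (∃ (D₁ : Type u) (D₂ : Type u) (_ : CommRing D₁) (_ : CommRing D₂)
      (_ : IsDomain D₁) (_ : IsDomain D₂) (f : R →+* D₁ × D₂), Function.Injective f)) ∨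
       ((∃ I : Ideal R, (I : Set R) = zdSet R) ∧
        (∃ x ∈ zdSet R, ∃ y ∈ zdSet R, ∀ a : R, a * x = 0 → a * y = 0 → a = 0))) := by
  constructor
  · intro hdiam
    have hex : ¬ ∀ u v : (zdStar R), (zdGraph R).edist u v ≤ 2 := by
      intro hall
      have h := ediam_le_iff.mpr hall
      rw [hdiam] at h
      norm_num at h
    push_neg at hex
    obtain ⟨u, v, hgt⟩ := hex
    have hne : u ≠ v := by
      rintro rfl
      exact hgt.not_ge (by simp [edist_self])
    have hne' : u.1 ≠ v.1 := fun h => hne (Subtype.ext h)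
    have hprod : u.1 * v.1 ≠ 0 := by
      intro h0
      have hadj : (zdGraph R).Adj u v := ⟨hne', h0⟩
      have h := edist_le (Walk.cons hadj Walk.nil)
      simp only [Walk.length_cons, Walk.length_nil] at h
      exact hgt.not_ge (h.trans (by norm_num))
    have hann : ∀ a : R, a * u.1 = 0 → a * v.1 = 0 → a = 0 := by
      intro a hau hav
      by_contra ha0
      have haz : a ∈ zdStar R := ⟨ha0, u.1, u.2.1, hau⟩
      have h1 : (zdGraph R).Adj u (⟨a, haz⟩ : (zdStar R)) :=
        ⟨fun h => hprod (by rw [h]; exact hav), by rw [mul_comm]; exact hau⟩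
      have h2 : (zdGraph R).Adj (⟨a, haz⟩ : (zdStar R)) v :=
        ⟨fun h => hprod (by have h' : a = v.1 := h; rw [← h', mul_comm]; exact hau), hav⟩
      have h := edist_le (Walk.cons h1 (Walk.cons h2 Walk.nil))
      simp only [Walk.length_cons, Walk.length_nil] at h
      exact hgt.not_ge (h.trans (by norm_num))
    have hpair : HasPair R := ⟨u.1, v.1, u.2, v.2, hne', hprod, hann⟩
    have hnemb : ¬ ∃ (D₁ : Type u) (D₂ : Type u) (_ : CommRing D₁) (_ : CommRing D₂)
        (_ : IsDomain D₁) (_ : IsDomain D₂) (f : R →+* D₁ × D₂), Function.Injective f :=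
      fun hemb => not_hasPair_of_emb hemb hpair
    by_cases hBool : ∀ x : R, x * x = x
    · left
      exact ⟨hBool, fun hiso => hnemb (emb_of_iso hiso)⟩
    · by_cases hI : ∃ I : Ideal R, (I : Set R) = zdSet R
      · right; right
        exact ⟨hI, u.1, u.2.2, v.1, v.2.2, hann⟩
      · right; left
        exact ⟨hI, hBool, hnemb⟩
  · intro h
    have hpair : HasPair R := by
      rcases h with ⟨hBool, hiso⟩ | ⟨hnI, hnB, hnemb⟩ | ⟨hI, h3⟩
      · exact boolean_pair hBool hcard hiso
      · by_contra hnp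
        exact hnemb (emb_of_noPair (noPair_of_not_hasPair hnp) hnI)
      · exact hasPair_of_ideal hI h3
    obtain ⟨x, y, hx, hy, hne, hprod, hann⟩ := hpair
    refine le_antisymm (ediam_le_iff.mpr fun u v => edist_le_three u v) ?_
    have hgt : ¬ (zdGraph R).edist ⟨x, hx⟩ ⟨y, hy⟩ ≤ 2 :=
      fun hle => edist_gt_two hprod hann hle
    have h3le : (3 : ℕ∞) ≤ (zdGraph R).edist ⟨x, hx⟩ ⟨y, hy⟩ := by
      have hlt := not_le.mp hgt
      have := Order.add_one_le_of_lt hlt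
      rw [show (2 : ℕ∞) + 1 = 3 by norm_num] at this
      exact this
    exact le_trans h3le edist_le_ediam

theorem stmt11 (R : Type u) [CommRing R] [Nontrivial R]
    (hcard : (zdStar R).Nontrivial) :
    (zdGraph R).ediam = 3 ↔
      (((∀ x : R, x * x = x) ∧ ¬ Nonempty (R ≃+* (ZMod 2 × ZMod 2))) ∨
       ((¬ (∃ I : Ideal R, (I : Set R) = zdSet R)) ∧ ¬ (∀ x : R, x * x = x) ∧
        ¬ (∃ (D₁ : Type u) (D₂ : Type u) (_ : CommRing D₁) (_ : CommRing D₂)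
      (_ : IsDomain D₁) (_ : IsDomain D₂) (f : R →+* D₁ × D₂), Function.Injective f)) ∨
       ((∃ I : Ideal R, (I : Set R) = zdSet R) ∧
        (∃ x ∈ zdSet R, ∃ y ∈ zdSet R, ∀ a : R, a * x = 0 → a * y = 0 → a = 0))) := stmt11' hcard
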